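/- Fix a positive integer n, and for a positive integer m define b_m ∈ Ar_n by b_m(d) = C(dm−1, d−1) mod n. Then for any h ∈ Ar_n, h∗E lies in R_n if and only if h∗b_m lies in R_n, where E is the constant function 1. -/

import Mathlib

/-- Membership in the subring `R_n` of special arithmetic functions mod `n`. -/
def Rn (n : ℕ) (f : ArithmeticFunction (ZMod n)) : Prop :=
  ∀ t : ℕ, t ∣ n → (t : ZMod n) ∣ f t

/-- The constant function `1` (on positive integers), as an arithmetic function
with values in `ZMod n`. -/
def Efun (n : ℕ) : ArithmeticFunction (ZMod n) :=
  ⟨fun a => if a = 0 then 0 else 1, by simp⟩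

/-- The classical Möbius function reduced mod `n`. -/
noncomputable def muMod (n : ℕ) : ArithmeticFunction (ZMod n) :=
  ⟨fun a => ((ArithmeticFunction.moebius a : ℤ) : ZMod n), by simp⟩

/-- The binomial coefficient function `b_m(d) = C(dm-1, d-1)` mod `n`, as an
arithmetic function. -/
def bm (n m : ℕ) : ArithmeticFunction (ZMod n) :=
  ⟨fun d => if d = 0 then 0 else ((d * m - 1).choose (d - 1) : ZMod n), by simp⟩

/-!
Put `g = μ ∗ b_m`. Since `E ∗ μ = 1`, `h ∗ b_m = (h ∗ E) ∗ g`, and `g(1) = 1`. The Gauss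
congruence `t ∣ g(t)` says `g ∈ R_n`; as `R_n` is closed under `∗` and an element of `R_n`
whose value at `1` is a unit can be cancelled (induction over the divisors of `t`), we get
`h ∗ E ∈ R_n ↔ (h ∗ E) ∗ g ∈ R_n`.

The Gauss congruence is checked one prime at a time: it follows from
`b_m(x) ≡ b_m(x / p) mod p ^ v_p(x)` for `p ∣ x`, which in turn comes from
`m · b_m(x) = C(xm, x)` and `(1 + X) ^ (p N) ≡ (1 + X ^ p) ^ N mod p ^ (k + 1)` when `p ^ k ∣ N`.
-/

open Finset Polynomial ArithmeticFunction
open scoped ArithmeticFunction.Moebius ArithmeticFunction.zeta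

theorem ArithmeticFunction.mul_apply_eq_sum_divisors {R : Type*} [Semiring R]
    (f g : ArithmeticFunction R) (t : ℕ) :
    (f * g) t = ∑ d ∈ t.divisors, f d * g (t / d) :=
  mul_apply.trans (Nat.sum_divisorsAntidiagonal fun a b => f a * g b)

theorem Nat.Coprime.sum_divisors_mul_eq {M : Type*} [AddCommMonoid M] {a b : ℕ}
    (hab : a.Coprime b) (f : ℕ → M) :
    ∑ d ∈ (a * b).divisors, f d = ∑ i ∈ a.divisors, ∑ j ∈ b.divisors, f (i * j) := by
  rw [hab.divisors_mul, sum_map]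
  exact (sum_attach _ fun x : ℕ × ℕ => f (x.1 * x.2)).trans (sum_product _ _ _)

theorem sum_divisors_prime_pow_moebius_mul {p r : ℕ} (hp : p.Prime) (hr : r ≠ 0) (f : ℕ → ℤ) :
    ∑ i ∈ (p ^ r).divisors, μ i * f i = f 1 - f p := by
  obtain ⟨s, rfl⟩ := Nat.exists_eq_add_one.mpr (Nat.pos_of_ne_zero hr)
  have hvanish : ∀ k ∈ range s, μ (p ^ (k + 2)) * f (p ^ (k + 2)) = 0 := fun k _ => by
    simp [moebius_apply_prime_pow hp]
  rw [Nat.sum_divisors_prime_pow hp, sum_range_succ', sum_range_succ', sum_eq_zero hvanish]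
  simp [moebius_apply_prime hp]
  ring

theorem prime_pow_factorization_dvd_moebius_mul_apply {a : ArithmeticFunction ℤ} {p : ℕ}
    (hp : p.Prime) (ha : ∀ x, p ∣ x → (p : ℤ) ^ x.factorization p ∣ a x - a (x / p)) (t : ℕ) :
    (p : ℤ) ^ t.factorization p ∣ (μ * a) t := by
  rcases eq_or_ne t 0 with rfl | ht
  · simp
  set r := t.factorization p
  rcases eq_or_ne r 0 with hr | hr
  · simp [hr]
  -- Split `t = p ^ r * u` with `p ∤ u`: of the divisors of `p ^ r` only `1` and `p` have `μ ≠ 0`.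
  have hcop : (p ^ r).Coprime (ordCompl[p] t) := (Nat.coprime_ordCompl hp ht).pow_left r
  have hsum := hcop.sum_divisors_mul_eq fun d => μ d * a (t / d)
  rw [Nat.ordProj_mul_ordCompl_eq_self] at hsum
  rw [mul_apply_eq_sum_divisors, hsum, sum_comm]
  refine dvd_sum fun j hj => ?_
  have hju : j ∣ ordCompl[p] t := Nat.dvd_of_mem_divisors hj
  have hjt : j ∣ t := hju.trans (Nat.ordCompl_dvd t p)
  have hpj : ¬ p ∣ j := fun h => Nat.not_dvd_ordCompl hp ht (h.trans hju)
  have hfac : (t / j).factorization p = r := by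
    rw [Nat.factorization_div hjt, Finsupp.tsub_apply, Nat.factorization_eq_zero_of_not_dvd hpj,
      Nat.sub_zero]
  have hpt : p ∣ t / j := Nat.dvd_of_factorization_pos (hfac ▸ hr)
  have hterm : ∀ i ∈ (p ^ r).divisors,
      μ (i * j) * a (t / (i * j)) = μ i * (μ j * a (t / j / i)) := fun i hi => by
    have hij : i.Coprime j :=
      (hcop.coprime_dvd_left (Nat.dvd_of_mem_divisors hi)).coprime_dvd_right hju
    rw [isMultiplicative_moebius.map_mul_of_coprime hij, Nat.div_div_eq_div_mul, mul_comm j]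
    ring
  rw [sum_congr rfl hterm, sum_divisors_prime_pow_moebius_mul hp hr, Nat.div_one, ← mul_sub]
  exact dvd_mul_of_dvd_right (hfac ▸ ha (t / j) hpt) _

theorem natCast_dvd_moebius_mul_apply {a : ArithmeticFunction ℤ}
    (ha : ∀ p x : ℕ, p.Prime → p ∣ x → (p : ℤ) ^ x.factorization p ∣ a x - a (x / p)) (t : ℕ) :
    (t : ℤ) ∣ (μ * a) t := by
  rcases eq_or_ne t 0 with rfl | ht
  · simp
  rw [Int.natCast_dvd, Nat.dvd_iff_prime_pow_dvd_dvd]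
  intro p k hp hpk
  have hk : p ^ k ∣ p ^ t.factorization p :=
    pow_dvd_pow p ((hp.pow_dvd_iff_le_factorization ht).mp hpk)
  refine hk.trans (Int.natCast_dvd.mp ?_)
  exact_mod_cast prime_pow_factorization_dvd_moebius_mul_apply hp (ha p · hp) t

theorem prime_pow_succ_dvd_one_add_X_pow_sub_one_add_X_pow {R : Type*} [CommRing R] {p : ℕ}
    (hp : p.Prime) (k w : ℕ) :
    (p : R[X]) ^ (k + 1) ∣ (1 + X) ^ (p ^ (k + 1) * w) - (1 + X ^ p) ^ (p ^ k * w) := by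
  have frobenius : (p : R[X]) ∣ (1 + X) ^ p - (1 + X ^ p) := by
    obtain ⟨r, hr⟩ := exists_add_pow_prime_eq hp (1 : R[X]) X
    exact ⟨X * r, by rw [hr]; ring⟩
  calc (p : R[X]) ^ (k + 1)
      ∣ ((1 + X) ^ p) ^ p ^ k - (1 + X ^ p) ^ p ^ k := dvd_sub_pow_of_dvd_sub frobenius k
    _ ∣ (((1 + X) ^ p) ^ p ^ k) ^ w - ((1 + X ^ p) ^ p ^ k) ^ w := sub_dvd_pow_sub_pow _ _ w
    _ = (1 + X) ^ (p ^ (k + 1) * w) - (1 + X ^ p) ^ (p ^ k * w) := by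
      rw [← pow_mul, ← pow_mul, ← pow_mul, pow_succ', mul_assoc]

theorem prime_pow_succ_dvd_choose_sub_choose {p : ℕ} (hp : p.Prime) (k w : ℕ) {x : ℕ}
    (hx : p ∣ x) :
    (p : ℤ) ^ (k + 1) ∣ ((p ^ (k + 1) * w).choose x : ℤ) - ((p ^ k * w).choose (x / p) : ℤ) := by
  obtain ⟨G, hG⟩ := prime_pow_succ_dvd_one_add_X_pow_sub_one_add_X_pow (R := ℤ) hp k w
  have hexpand : (1 + X ^ p : ℤ[X]) = expand ℤ p (X + 1) := by simp [add_comm]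
  refine ⟨G.coeff x, ?_⟩
  have hcoeff := congrArg (coeff · x) hG
  simp only [coeff_sub] at hcoeff
  rwa [add_comm 1 X, coeff_X_add_one_pow, hexpand, ← map_pow, coeff_expand hp.pos, if_pos hx,
    coeff_X_add_one_pow, ← C_eq_natCast, ← C_pow, coeff_C_mul] at hcoeff

theorem Nat.choose_mul_eq_mul_choose_pred (m : ℕ) {x : ℕ} (hx : 0 < x) :
    (x * m).choose x = m * (x * m - 1).choose (x - 1) := by
  rcases Nat.eq_zero_or_pos m with rfl | hm
  · simp [Nat.choose_eq_zero_of_lt hx]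
  have h := Nat.add_one_mul_choose_eq (x * m - 1) (x - 1)
  rw [Nat.sub_add_cancel (Nat.mul_pos hx hm), Nat.sub_add_cancel hx] at h
  apply Nat.eq_of_mul_eq_mul_right hx
  rw [← h]; ring

def bmInt (m : ℕ) : ArithmeticFunction ℤ :=
  ⟨fun d => if d = 0 then 0 else ((d * m - 1).choose (d - 1) : ℤ), by simp⟩

theorem natCast_mul_bmInt {m x : ℕ} (hx : 0 < x) :
    (m : ℤ) * bmInt m x = ((x * m).choose x : ℤ) := by
  simp [bmInt, hx.ne', Nat.choose_mul_eq_mul_choose_pred m hx]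

theorem prime_pow_factorization_dvd_bmInt_sub {m p x : ℕ} (hm : 0 < m) (hp : p.Prime)
    (hx : p ∣ x) : (p : ℤ) ^ x.factorization p ∣ bmInt m x - bmInt m (x / p) := by
  rcases Nat.eq_zero_or_pos x with rfl | hx0
  · simp
  obtain ⟨s, hs⟩ : ∃ s, x.factorization p = s + 1 :=
    Nat.exists_eq_add_one.mpr (hp.factorization_pos_of_dvd hx0.ne' hx)
  set e := m.factorization p
  obtain ⟨w, hw⟩ : p ^ (s + e + 1) ∣ x * m := by
    rw [add_right_comm, ← hs, pow_add]
    exact mul_dvd_mul (Nat.ordProj_dvd x p) (Nat.ordProj_dvd m p)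
  have hw' : x / p * m = p ^ (s + e) * w := by
    apply Nat.eq_of_mul_eq_mul_left hp.pos
    rw [← mul_assoc, Nat.mul_div_cancel' hx, hw, pow_succ']; ring
  have hm_split : (m : ℤ) = p ^ e * (ordCompl[p] m : ℕ) := by
    exact_mod_cast (Nat.ordProj_mul_ordCompl_eq_self m p).symm
  -- `C(xm, x) - C(xm / p, x / p) = m (b(x) - b(x / p))`: cancel the `p`-part of `m`, then the rest.
  have key := prime_pow_succ_dvd_choose_sub_choose hp (s + e) w hx
  rw [← hw, ← hw', ← natCast_mul_bmInt hx0,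
    ← natCast_mul_bmInt (Nat.div_pos (Nat.le_of_dvd hx0 hx) hp.pos), ← mul_sub, hm_split,
    add_right_comm, ← hs, pow_add, mul_comm ((p : ℤ) ^ _), mul_assoc,
    mul_dvd_mul_iff_left (by simp [hp.ne_zero])] at key
  refine (IsCoprime.pow_left ?_).dvd_of_dvd_mul_left key
  exact Nat.isCoprime_iff_coprime.mpr (Nat.coprime_ordCompl hp hm.ne')

theorem natCast_dvd_moebius_mul_bmInt_apply {m : ℕ} (hm : 0 < m) (t : ℕ) :
    (t : ℤ) ∣ (μ * bmInt m) t :=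
  natCast_dvd_moebius_mul_apply
    (fun _ _ hp hx => prime_pow_factorization_dvd_bmInt_sub hm hp hx) t

section Rn

variable {n : ℕ} {f g : ArithmeticFunction (ZMod n)}

theorem natCast_dvd_apply_mul_apply_div (hg : Rn n g) {t d : ℕ} (htn : t ∣ n) (hdt : d ∣ t)
    (hd : (d : ZMod n) ∣ f d) : (t : ZMod n) ∣ f d * g (t / d) := by
  have := mul_dvd_mul hd (hg (t / d) ((Nat.div_dvd_of_dvd hdt).trans htn))
  rwa [← Nat.cast_mul, Nat.mul_div_cancel' hdt] at this

theorem Rn.mul (hf : Rn n f) (hg : Rn n g) : Rn n (f * g) := fun t htn => by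
  rw [mul_apply_eq_sum_divisors]
  refine dvd_sum fun d hd => ?_
  have hdt := Nat.dvd_of_mem_divisors hd
  exact natCast_dvd_apply_mul_apply_div hg htn hdt (hf d (hdt.trans htn))

theorem Rn.of_mul (hfg : Rn n (f * g)) (hg : Rn n g) (hg1 : IsUnit (g 1)) : Rn n f := by
  intro t
  induction t using Nat.strong_induction_on with
  | _ t ih =>
  intro htn
  rcases eq_or_ne t 0 with rfl | ht
  · simp
  have hproper : (t : ZMod n) ∣ ∑ d ∈ t.properDivisors, f d * g (t / d) := by
    refine dvd_sum fun d hd => ?_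
    obtain ⟨hdt, hlt⟩ := Nat.mem_properDivisors.mp hd
    exact natCast_dvd_apply_mul_apply_div hg htn hdt (ih d hlt (hdt.trans htn))
  have htop := hfg t htn
  rw [mul_apply_eq_sum_divisors, ← Nat.cons_self_properDivisors ht, sum_cons,
    Nat.div_self (Nat.pos_of_ne_zero ht), dvd_add_left hproper] at htop
  exact hg1.dvd_mul_right.mp htop

theorem Rn.mul_iff (hg : Rn n g) (hg1 : IsUnit (g 1)) : Rn n (f * g) ↔ Rn n f :=
  ⟨fun hfg => hfg.of_mul hg hg1, fun hf => hf.mul hg⟩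

end Rn

theorem Efun_eq_zeta (n : ℕ) : Efun n = ζ := by
  ext d
  simp [Efun, natCoe_apply, zeta_apply]

theorem muMod_eq_moebius (n : ℕ) : muMod n = μ := by
  ext d
  simp [muMod, intCoe_apply]

theorem bm_eq_bmInt (n m : ℕ) : bm n m = bmInt m := by
  ext d
  rw [intCoe_apply]
  by_cases hd : d = 0 <;> simp [bm, bmInt, hd]

theorem Rn_muMod_mul_bm {m : ℕ} (hm : 0 < m) (n : ℕ) : Rn n (muMod n * bm n m) := fun t _ => by
  rw [muMod_eq_moebius, bm_eq_bmInt, ← intCoe_mul, intCoe_apply]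
  simpa using (Int.castRingHom (ZMod n)).map_dvd (natCast_dvd_moebius_mul_bmInt_apply hm t)

theorem muMod_mul_bm_apply_one (n m : ℕ) : (muMod n * bm n m) 1 = 1 := by
  rw [mul_apply_one]
  simp [muMod, bm]

theorem stmt6_general (n : ℕ) (m : ℕ) (hm : 0 < m)
    (h : ArithmeticFunction (ZMod n)) :
    Rn n (h * Efun n) ↔ Rn n (h * bm n m) := by
  have hfactor : h * bm n m = h * Efun n * (muMod n * bm n m) := by
    rw [mul_assoc, ← mul_assoc (Efun n), Efun_eq_zeta, muMod_eq_moebius, coe_zeta_mul_coe_moebius,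
      one_mul]
  rw [hfactor, Rn.mul_iff (Rn_muMod_mul_bm hm n) (muMod_mul_bm_apply_one n m ▸ isUnit_one)]

/-- For any arithmetic function `h` mod `n` and positive `m`:
`h ∗ E` is special iff `h ∗ b_m` is special. -/
theorem stmt6 (n : ℕ) (hn : 0 < n) (m : ℕ) (hm : 0 < m)
    (h : ArithmeticFunction (ZMod n)) :
    Rn n (h * Efun n) ↔ Rn n (h * bm n m) :=
  stmt6_general n m hm h
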